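/- arXiv:1503.02518 — 2 statements merged into one kernel-verified Lean document; each statement's English description precedes it below -/
import Mathlib

section
/- Let E be a two-dimensional real inner product space, K ≥ 1 a real number, and T : E → E a continuous linear equivalence such that ‖T x‖ ≤ K·‖T y‖ for all unit vectors x, y ∈ E. Then for every continuous linear functional f : E → ℝ, one has (1/K)·|det T|·‖f‖² ≤ ‖f ∘ T‖² ≤ K·|det T|·‖f‖², where ‖·‖ denotes the operator norm on continuous linear functionals. -/
open scoped RealInnerProductSpace

set_option maxHeartbeats 2000000

/-- If `T` is a `K`-quasiconformal continuous linear equivalence of a two-dimensional real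
inner product space (i.e. `‖T x‖ ≤ K·‖T y‖` for all unit vectors `x, y`), then for every
continuous linear functional `f` one has
`(1/K)·|det T|·‖f‖² ≤ ‖f ∘ T‖² ≤ K·|det T|·‖f‖²`. -/
theorem quasiconformal_opNorm_comp_sq_bounds {E : Type*}
    [NormedAddCommGroup E] [InnerProductSpace ℝ E] [FiniteDimensional ℝ E]
    (hdim : Module.finrank ℝ E = 2) (K : ℝ) (hK : 1 ≤ K) (T : E ≃L[ℝ] E)
    (hqc : ∀ x y : E, ‖x‖ = 1 → ‖y‖ = 1 → ‖T x‖ ≤ K * ‖T y‖)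
    (f : E →L[ℝ] ℝ) :
    (1 / K) * |LinearMap.det ((T : E →L[ℝ] E) : E →ₗ[ℝ] E)| * ‖f‖ ^ 2 ≤
        ‖f.comp (T : E →L[ℝ] E)‖ ^ 2 ∧
      ‖f.comp (T : E →L[ℝ] E)‖ ^ 2 ≤
        K * |LinearMap.det ((T : E →L[ℝ] E) : E →ₗ[ℝ] E)| * ‖f‖ ^ 2 := by
  have hK0 : (0:ℝ) < K := lt_of_lt_of_le zero_lt_one hK
  have hnt : Nontrivial E :=
    Module.nontrivial_of_finrank_pos (R := ℝ) (by omega : 0 < Module.finrank ℝ E)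
  -- a maximizing unit vector u
  obtain ⟨u, huS, hmax⟩ :=
    (isCompact_sphere (0:E) 1).exists_isMaxOn
      (NormedSpace.sphere_nonempty.mpr zero_le_one)
      (Continuous.continuousOn (by continuity : Continuous fun x : E => ‖T x‖))
  rw [mem_sphere_zero_iff_norm] at huS
  have hmax' : ∀ w : E, ‖w‖ = 1 → ‖T w‖ ≤ ‖T u‖ := fun w hw =>
    hmax (mem_sphere_zero_iff_norm.mpr hw)
  -- a unit vector orthogonal to u
  have hu0 : u ≠ 0 := by intro h; rw [h, norm_zero] at huS; norm_num at huS
  obtain ⟨w, hwmem, hw0⟩ : ∃ w, w ∈ (ℝ ∙ u)ᗮ ∧ w ≠ 0 := by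
    have h1 : Module.finrank ℝ (ℝ ∙ u) = 1 := finrank_span_singleton hu0
    have h2 : Module.finrank ℝ (ℝ ∙ u)ᗮ = 1 := by
      have := Submodule.finrank_add_finrank_orthogonal (K := (ℝ ∙ u))
      omega
    have hne : (ℝ ∙ u)ᗮ ≠ ⊥ := by
      intro h
      rw [h] at h2
      simp at h2
    exact Submodule.exists_mem_ne_zero_of_ne_bot hne
  set v : E := ‖w‖⁻¹ • w with hvdef
  have hv : ‖v‖ = 1 := by
    rw [hvdef, norm_smul, norm_inv, norm_norm, inv_mul_cancel₀ (norm_ne_zero_iff.mpr hw0)]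
  have huv : ⟪u, v⟫ = 0 := by
    have := hwmem u (Submodule.mem_span_singleton_self u)
    rw [hvdef, real_inner_smul_right, this, mul_zero]
  set a := ‖T u‖ with ha
  set c := ‖T v‖ with hc
  have hca : c ≤ a := hmax' v hv
  have ha0 : 0 ≤ a := norm_nonneg _
  have hc0 : 0 < c := by
    rw [hc, norm_pos_iff]
    intro h
    have hv0 : v = 0 := by
      have := T.injective (a₁ := v) (a₂ := 0) (by simpa using h)
      simpa using this
    rw [hv0, norm_zero] at hv; norm_num at hv
  -- homogeneous upper bound
  have hA : ∀ x : E, ‖T x‖ ≤ a * ‖x‖ := by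
    intro x
    rcases eq_or_ne x 0 with rfl | hx
    · simp
    · have hx' : ‖(‖x‖⁻¹ • x)‖ = 1 := by
        rw [norm_smul, norm_inv, norm_norm, inv_mul_cancel₀ (norm_ne_zero_iff.mpr hx)]
      have h := hmax' _ hx'
      rw [map_smul, norm_smul, norm_inv, norm_norm] at h
      have hxn : (0:ℝ) < ‖x‖ := norm_pos_iff.mpr hx
      calc ‖T x‖ = ‖x‖ * (‖x‖⁻¹ * ‖T x‖) := by field_simp
        _ ≤ ‖x‖ * a := mul_le_mul_of_nonneg_left h hxn.le
        _ = a * ‖x‖ := mul_comm _ _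
  -- orthogonality of Tu and Tv
  set p := ⟪T u, T v⟫ with hp
  have hTuv : p = 0 := by
    have key : ∀ ε : ℝ, 2 * ε * p ≤ ε ^ 2 * (a ^ 2 - c ^ 2) := by
      intro ε
      have h1 : ‖T (u + ε • v)‖ ≤ a * ‖u + ε • v‖ := hA _
      have h2 : ‖u + ε • v‖ ^ 2 = 1 + ε ^ 2 := by
        rw [norm_add_sq_real, real_inner_smul_right, huv, norm_smul]
        simp [huS, hv]
      have h3 : ‖T (u + ε • v)‖ ^ 2 = a ^ 2 + 2 * ε * p + ε ^ 2 * c ^ 2 := by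
        rw [map_add, map_smul, norm_add_sq_real, real_inner_smul_right, norm_smul]
        simp only [Real.norm_eq_abs, mul_pow, sq_abs, ← ha, ← hc, ← hp]
        ring
      have h4 : ‖T (u + ε • v)‖ ^ 2 ≤ a ^ 2 * ‖u + ε • v‖ ^ 2 := by
        calc ‖T (u + ε • v)‖ ^ 2 ≤ (a * ‖u + ε • v‖) ^ 2 := by
              rw [sq, sq]; exact mul_self_le_mul_self (norm_nonneg _) h1
          _ = a ^ 2 * ‖u + ε • v‖ ^ 2 := by ring
      rw [h3, h2] at h4
      nlinarith
    have hD : 0 ≤ a ^ 2 - c ^ 2 := by nlinarith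
    by_contra hpne
    have hD1 : (0:ℝ) < a ^ 2 - c ^ 2 + 1 := by linarith
    have h := key (p / (a ^ 2 - c ^ 2 + 1))
    rw [div_pow] at h
    set ε₀ := p / (a ^ 2 - c ^ 2 + 1) with hε₀def
    have hεp : ε₀ * (a ^ 2 - c ^ 2 + 1) = p := by
      rw [hε₀def]; field_simp
    have hε0 : ε₀ ≠ 0 := by
      intro h0; apply hpne; rw [← hεp, h0, zero_mul]
    have hε2 : 0 < ε₀ ^ 2 := by positivity
    nlinarith [key ε₀, hεp, hD, hε2]
  -- orthonormal basis
  set b : Fin 2 → E := ![u, v] with hb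
  have hon : Orthonormal ℝ b := by
    constructor
    · intro i
      fin_cases i
      · simpa [hb] using huS
      · simpa [hb] using hv
    · intro i j hij
      fin_cases i <;> fin_cases j <;>
        simp only [hb, Matrix.cons_val_zero, Matrix.cons_val_one, Matrix.head_cons,
          Fin.mk_zero, Fin.mk_one]
      · exact absurd rfl hij
      · exact huv
      · rw [real_inner_comm]; exact huv
      · exact absurd rfl hij
  have hcard : Fintype.card (Fin 2) = Module.finrank ℝ E := by simp [hdim]
  set B0 : Module.Basis (Fin 2) ℝ E := basisOfOrthonormalOfCardEqFinrank hon hcard with hB0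
  have hB0coe : (B0 : Fin 2 → E) = b := coe_basisOfOrthonormalOfCardEqFinrank hon hcard
  have hon' : Orthonormal ℝ B0 := by rw [hB0coe]; exact hon
  set B : OrthonormalBasis (Fin 2) ℝ E := B0.toOrthonormalBasis hon' with hBdef
  have hBu : B 0 = u := by
    rw [hBdef, Module.Basis.coe_toOrthonormalBasis, hB0coe]; rfl
  have hBv : B 1 = v := by
    rw [hBdef, Module.Basis.coe_toOrthonormalBasis, hB0coe]; rfl
  -- coordinates
  have hrepr : ∀ x : E, x = ⟪u, x⟫ • u + ⟪v, x⟫ • v := by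
    intro x
    have h := B.sum_repr x
    rw [Fin.sum_univ_two, B.repr_apply_apply, B.repr_apply_apply, hBu, hBv] at h
    exact h.symm
  -- norms in coordinates
  have hnormsq : ∀ (α β : ℝ), ‖α • u + β • v‖ ^ 2 = α ^ 2 + β ^ 2 := by
    intro α β
    rw [norm_add_sq_real, real_inner_smul_left, real_inner_smul_right, huv,
      norm_smul, norm_smul]
    simp [huS, hv, sq_abs]
  have hTnormsq : ∀ (α β : ℝ),
      ‖T (α • u + β • v)‖ ^ 2 = α ^ 2 * a ^ 2 + β ^ 2 * c ^ 2 := by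
    intro α β
    rw [map_add, map_smul, map_smul, norm_add_sq_real, real_inner_smul_left,
      real_inner_smul_right, ← hp, hTuv, norm_smul, norm_smul]
    simp only [Real.norm_eq_abs, mul_pow, sq_abs, ← ha, ← hc]
    ring
  -- lower bound c‖x‖ ≤ ‖Tx‖
  have hC : ∀ x : E, c * ‖x‖ ≤ ‖T x‖ := by
    intro x
    have h1 := hrepr x
    set α := ⟪u, x⟫
    set β := ⟪v, x⟫
    have h2 : ‖x‖ ^ 2 = α ^ 2 + β ^ 2 := by rw [h1]; exact hnormsq α β
    have h3 : ‖T x‖ ^ 2 = α ^ 2 * a ^ 2 + β ^ 2 * c ^ 2 := by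
      conv_lhs => rw [h1]
      exact hTnormsq α β
    have h4 : (c * ‖x‖) ^ 2 ≤ ‖T x‖ ^ 2 := by
      rw [mul_pow, h2, h3]
      have hc2a2 : c ^ 2 ≤ a ^ 2 := by nlinarith
      nlinarith [mul_le_mul_of_nonneg_left hc2a2 (sq_nonneg α)]
    exact (abs_le_of_sq_le_sq' h4 (norm_nonneg _)).2
  -- determinant
  have hdet : |LinearMap.det ((T : E →L[ℝ] E) : E →ₗ[ℝ] E)| = a * c := by
    set L : E →ₗ[ℝ] E := ((T : E →L[ℝ] E) : E →ₗ[ℝ] E) with hL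
    set M := LinearMap.toMatrix B0 B0 L with hM
    have hdet1 : LinearMap.det L = M.det := (LinearMap.det_toMatrix B0 L).symm
    have hLapp : ∀ x, L x = T x := by
      intro x
      rw [hL]
      simp
    have hMij : ∀ i j, M i j = ⟪B i, T (B0 j)⟫ := by
      intro i j
      rw [hM, LinearMap.toMatrix_apply]
      rw [← B.repr_apply_apply, hLapp]
      congr 1
    have hB0u : B0 0 = u := by rw [← hBu, hBdef, Module.Basis.coe_toOrthonormalBasis]
    have hB0v : B0 1 = v := by rw [← hBv, hBdef, Module.Basis.coe_toOrthonormalBasis]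
    set m00 := ⟪u, T u⟫
    set m10 := ⟪v, T u⟫
    set m01 := ⟪u, T v⟫
    set m11 := ⟪v, T v⟫
    have hM00 : M 0 0 = m00 := by rw [hMij, hBu, hB0u]
    have hM10 : M 1 0 = m10 := by rw [hMij, hBv, hB0u]
    have hM01 : M 0 1 = m01 := by rw [hMij, hBu, hB0v]
    have hM11 : M 1 1 = m11 := by rw [hMij, hBv, hB0v]
    have hsum : ∀ x y : E, ⟪x, u⟫ * ⟪u, y⟫ + ⟪x, v⟫ * ⟪v, y⟫ = ⟪x, y⟫ := by
      intro x y
      have h := B.sum_inner_mul_inner x y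
      rw [Fin.sum_univ_two, hBu, hBv] at h
      exact h
    have ea : m00 * m00 + m10 * m10 = a ^ 2 := by
      have h := hsum (T u) (T u)
      rw [real_inner_comm u (T u), real_inner_comm v (T u),
        real_inner_self_eq_norm_sq] at h
      exact h
    have ec : m01 * m01 + m11 * m11 = c ^ 2 := by
      have h := hsum (T v) (T v)
      rw [real_inner_comm u (T v), real_inner_comm v (T v),
        real_inner_self_eq_norm_sq] at h
      exact h
    have ep : m00 * m01 + m10 * m11 = 0 := by
      have h := hsum (T u) (T v)
      rw [real_inner_comm u (T u), real_inner_comm v (T u)] at h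
      rw [h, ← hp, hTuv]
    have hdsq : (LinearMap.det L) ^ 2 = (a * c) ^ 2 := by
      rw [hdet1, Matrix.det_fin_two, hM00, hM01, hM10, hM11]
      nlinarith [ea, ec, ep]
    have := Real.sqrt_sq_eq_abs (LinearMap.det L)
    rw [hdsq, Real.sqrt_sq (by positivity : (0:ℝ) ≤ a * c)] at this
    exact this.symm
  -- operator norm bounds
  set N := ‖f.comp (T : E →L[ℝ] E)‖ with hN
  have hN0 : 0 ≤ N := norm_nonneg _
  have hF0 : 0 ≤ ‖f‖ := norm_nonneg _
  have hup : N ≤ a * ‖f‖ := by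
    rw [hN]
    apply ContinuousLinearMap.opNorm_le_bound _ (by positivity)
    intro x
    calc ‖(f.comp (T : E →L[ℝ] E)) x‖ = ‖f (T x)‖ := rfl
      _ ≤ ‖f‖ * ‖T x‖ := f.le_opNorm _
      _ ≤ ‖f‖ * (a * ‖x‖) := mul_le_mul_of_nonneg_left (hA x) hF0
      _ = a * ‖f‖ * ‖x‖ := by ring
  have hlow : c * ‖f‖ ≤ N := by
    have hfle : ‖f‖ ≤ c⁻¹ * N := by
      apply ContinuousLinearMap.opNorm_le_bound _ (by positivity)
      intro x
      have hTix : ‖(T.symm x : E)‖ ≤ c⁻¹ * ‖x‖ := by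
        have := hC (T.symm x)
        rw [T.apply_symm_apply] at this
        rw [le_inv_mul_iff₀ hc0]
        linarith
      calc ‖f x‖ = ‖(f.comp (T : E →L[ℝ] E)) (T.symm x)‖ := by
            simp [ContinuousLinearMap.comp_apply]
        _ ≤ N * ‖(T.symm x : E)‖ := (f.comp (T : E →L[ℝ] E)).le_opNorm _
        _ ≤ N * (c⁻¹ * ‖x‖) := mul_le_mul_of_nonneg_left hTix hN0
        _ = c⁻¹ * N * ‖x‖ := by ring
    calc c * ‖f‖ ≤ c * (c⁻¹ * N) := mul_le_mul_of_nonneg_left hfle hc0.le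
      _ = N := by field_simp
  -- finish
  have haKc : a ≤ K * c := by
    have := hqc u v huS hv
    rw [← ha, ← hc] at this
    exact this
  rw [hdet]
  constructor
  · have h1 : (c * ‖f‖) ^ 2 ≤ N ^ 2 := by
      apply pow_le_pow_left₀ (by positivity)
      exact hlow
    rw [div_mul_eq_mul_div, div_mul_eq_mul_div, div_le_iff₀ hK0]
    nlinarith [sq_nonneg ‖f‖]
  · have h1 : N ^ 2 ≤ (a * ‖f‖) ^ 2 := by
      apply pow_le_pow_left₀ hN0
      exact hup
    nlinarith [sq_nonneg ‖f‖]
end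

section
/- Let U ⊆ ℝ² be an open set (with ℝ² carrying its Euclidean inner product and Lebesgue measure), let K ≥ 1, and let φ : ℝ² → ℝ² be injective on U and differentiable at each point of U with invertible derivative Dφ(p), satisfying the K-quasiconformality condition: for every p ∈ U and all unit vectors x, y ∈ ℝ², ‖Dφ(p) x‖ ≤ K·‖Dφ(p) y‖. Let f : ℝ² → [0, ∞] and g : ℝ² → [0, ∞] be measurable with g(φ(p)) = f(p) for all p ∈ U, and let ω : ℝ² → (ℝ² →L ℝ) assign measurably to each point a continuous linear functional. Then (1/K)·∫_{φ(U)} ‖ω(x)‖² g(x) dx ≤ ∫_U ‖ω(φ(p)) ∘ Dφ(p)‖² f(p) dp ≤ K·∫_{φ(U)} ‖ω(x)‖² g(x) dx, where the integrals are lower Lebesgue integrals and ‖·‖ is the operator norm on linear functionals. -/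
open MeasureTheory
open scoped ENNReal

open FiniteDimensional
open scoped RealInnerProductSpace

local notation "E2" => EuclideanSpace ℝ (Fin 2)

lemma alt_det_mul (T : E2 →ₗ[ℝ] E2) (F : E2 [⋀^Fin 2]→ₗ[ℝ] ℝ) (v : Fin 2 → E2) :
    F (T ∘ v) = LinearMap.det T * F v := by
  have b := (EuclideanSpace.basisFun (Fin 2) ℝ).toBasis
  rw [F.eq_smul_basis_det b]
  simp [Module.Basis.det_comp]
  ring

-- |det A| = ‖A u‖ * ‖A v‖ for an SVD pair
lemma abs_det_eq (A : E2 →L[ℝ] E2) {u v : E2} (hu : ‖u‖ = 1) (hv : ‖v‖ = 1)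
    (huv : ⟪u, v⟫ = 0) (hAuv : ⟪A u, A v⟫ = 0) :
    |A.det| = ‖A u‖ * ‖A v‖ := by
  haveI : Fact (Module.finrank ℝ E2 = 2) := ⟨finrank_euclideanSpace_fin⟩
  set o : Orientation ℝ E2 (Fin 2) :=
    (EuclideanSpace.basisFun (Fin 2) ℝ).toBasis.orientation with ho
  have h1 : o.areaForm (A u) (A v) = A.det * o.areaForm u v := by
    rw [o.areaForm_to_volumeForm, o.areaForm_to_volumeForm]
    have : ![A u, A v] = (A : E2 →ₗ[ℝ] E2) ∘ ![u, v] := by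
      funext i; fin_cases i <;> rfl
    rw [this, alt_det_mul]
  have h2 : |o.areaForm (A u) (A v)| = ‖A u‖ * ‖A v‖ :=
    o.abs_areaForm_of_orthogonal hAuv
  have h3 : |o.areaForm u v| = 1 := by
    rw [o.abs_areaForm_of_orthogonal huv, hu, hv, mul_one]
  rw [h1, abs_mul, h3, mul_one] at h2
  exact h2

lemma exists_svd_pair (A : E2 →L[ℝ] E2) :
    ∃ u v : E2, ‖u‖ = 1 ∧ ‖v‖ = 1 ∧ ⟪u, v⟫ = 0 ∧ ⟪A u, A v⟫ = 0 := by
  set e := EuclideanSpace.basisFun (Fin 2) ℝ with he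
  have he0 : ‖e 0‖ = 1 := e.orthonormal.1 0
  have he1 : ‖e 1‖ = 1 := e.orthonormal.1 1
  have h01 : ⟪(e 0 : E2), e 1⟫ = 0 := e.orthonormal.2 (by decide)
  have h10 : ⟪(e 1 : E2), e 0⟫ = 0 := by rw [real_inner_comm]; exact h01
  have h00 : ⟪(e 0 : E2), e 0⟫ = 1 := by
    rw [real_inner_self_eq_norm_sq, he0]; norm_num
  have h11 : ⟪(e 1 : E2), e 1⟫ = 1 := by
    rw [real_inner_self_eq_norm_sq, he1]; norm_num
  set u : ℝ → E2 := fun θ => Real.cos θ • e 0 + Real.sin θ • e 1 with hu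
  set v : ℝ → E2 := fun θ => -Real.sin θ • e 0 + Real.cos θ • e 1 with hv
  have hucont : Continuous u := by
    exact (Real.continuous_cos.smul continuous_const).add
      (Real.continuous_sin.smul continuous_const)
  have hvcont : Continuous v := by
    exact ((Real.continuous_sin.neg).smul continuous_const).add
      (Real.continuous_cos.smul continuous_const)
  have hcont : Continuous fun θ => ⟪A (u θ), A (v θ)⟫ :=
    (A.continuous.comp hucont).inner (A.continuous.comp hvcont)
  have hu2 : u (Real.pi / 2) = e 1 := by
    simp [hu, Real.cos_pi_div_two, Real.sin_pi_div_two]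
  have hv2 : v (Real.pi / 2) = -(e 0) := by
    simp [hv, Real.cos_pi_div_two, Real.sin_pi_div_two]
  have hu0 : u 0 = e 0 := by simp [hu]
  have hv0 : v 0 = e 1 := by simp [hv]
  have hval : (fun θ => ⟪A (u θ), A (v θ)⟫) (Real.pi / 2)
      = - (fun θ => ⟪A (u θ), A (v θ)⟫) 0 := by
    simp only [hu2, hv2, hu0, hv0, map_neg, inner_neg_right]
    rw [real_inner_comm]
  have h0mem : (0 : ℝ) ∈ Set.uIcc ((fun θ => ⟪A (u θ), A (v θ)⟫) 0)
      ((fun θ => ⟪A (u θ), A (v θ)⟫) (Real.pi / 2)) := by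
    rw [hval]
    rcases le_total ((fun θ => ⟪A (u θ), A (v θ)⟫) 0) 0 with h | h
    · exact Set.mem_uIcc.2 (Or.inl ⟨h, by linarith⟩)
    · exact Set.mem_uIcc.2 (Or.inr ⟨by linarith, h⟩)
  obtain ⟨θ, -, hθ⟩ := intermediate_value_uIcc hcont.continuousOn h0mem
  have hsc := Real.sin_sq_add_cos_sq θ
  have huu : ⟪u θ, u θ⟫ = 1 := by
    simp only [hu, inner_add_left, inner_add_right, real_inner_smul_left,
      real_inner_smul_right, h00, h11, h01, h10]
    ring_nf
    nlinarith
  have hvv : ⟪v θ, v θ⟫ = 1 := by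
    simp only [hv, inner_add_left, inner_add_right, real_inner_smul_left,
      real_inner_smul_right, h00, h11, h01, h10]
    ring_nf
    nlinarith
  have huv : ⟪u θ, v θ⟫ = 0 := by
    simp only [hu, hv, inner_add_left, inner_add_right, real_inner_smul_left,
      real_inner_smul_right, h00, h11, h01, h10]
    ring
  refine ⟨u θ, v θ, ?_, ?_, huv, hθ⟩
  · have h2 : ‖u θ‖ ^ 2 = 1 := by rw [← real_inner_self_eq_norm_sq]; exact huu
    calc ‖u θ‖ = Real.sqrt (‖u θ‖ ^ 2) := (Real.sqrt_sq (norm_nonneg _)).symm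
    _ = 1 := by rw [h2, Real.sqrt_one]
  · have h2 : ‖v θ‖ ^ 2 = 1 := by rw [← real_inner_self_eq_norm_sq]; exact hvv
    calc ‖v θ‖ = Real.sqrt (‖v θ‖ ^ 2) := (Real.sqrt_sq (norm_nonneg _)).symm
    _ = 1 := by rw [h2, Real.sqrt_one]

-- expansion & Pythagoras in an orthonormal pair
lemma expand_pair {u v : E2} (hu : ‖u‖ = 1) (hv : ‖v‖ = 1) (huv : ⟪u, v⟫ = 0) (x : E2) :
    x = ⟪u, x⟫ • u + ⟪v, x⟫ • v := by
  have horth : Orthonormal ℝ ![u, v] := by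
    constructor
    · intro i; fin_cases i <;> simpa
    · intro i j hij
      fin_cases i <;> fin_cases j <;>
        simp_all [real_inner_comm u v]
  have hcard : Fintype.card (Fin 2) = Module.finrank ℝ E2 := by
    simp [finrank_euclideanSpace_fin]
  let b := basisOfLinearIndependentOfCardEqFinrank horth.linearIndependent hcard
  have hb : ⇑b = ![u, v] := coe_basisOfLinearIndependentOfCardEqFinrank _ _
  let ob := b.toOrthonormalBasis (by rwa [hb])
  have hob : ⇑ob = ![u, v] := by rw [Module.Basis.coe_toOrthonormalBasis, hb]
  have := ob.sum_repr' x
  rw [Fin.sum_univ_two] at this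
  rw [hob] at this
  simpa using this.symm

lemma pythag {a b : E2} (hab : ⟪a, b⟫ = 0) (s t : ℝ) :
    ‖s • a + t • b‖ ^ 2 = s ^ 2 * ‖a‖ ^ 2 + t ^ 2 * ‖b‖ ^ 2 := by
  rw [norm_add_sq_real]
  rw [real_inner_smul_left, real_inner_smul_right, hab]
  rw [norm_smul, norm_smul]
  simp [mul_pow, Real.norm_eq_abs, sq_abs]

lemma arith_aux (K σ₁ σ₂ L N : ℝ) (hK : 1 ≤ K) (hσ₂ : 0 < σ₂) (h12 : σ₂ ≤ σ₁)
    (hqc : σ₁ ≤ K * σ₂) (hL : 0 ≤ L) (hN : 0 ≤ N) (hub : N ≤ L * σ₁) (hlb : L * σ₂ ≤ N) :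
    1 / K * (σ₁ * σ₂) * L ^ 2 ≤ N ^ 2 ∧ N ^ 2 ≤ K * (σ₁ * σ₂) * L ^ 2 := by
  have hK0 : (0:ℝ) < K := lt_of_lt_of_le one_pos hK
  constructor
  · rw [div_mul_eq_mul_div, div_mul_eq_mul_div, one_mul, div_le_iff₀ hK0]
    have f1 : (L * σ₂) ^ 2 ≤ N ^ 2 := pow_le_pow_left₀ (by positivity) hlb 2
    have f2 : σ₁ * σ₂ ≤ K * (σ₂ * σ₂) := by nlinarith
    nlinarith [mul_le_mul_of_nonneg_left f2 (sq_nonneg L),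
      mul_le_mul_of_nonneg_left f1 hK0.le]
  · have f1 : N ^ 2 ≤ (L * σ₁) ^ 2 := pow_le_pow_left₀ hN hub 2
    have f2 : σ₁ * σ₁ ≤ K * σ₂ * σ₁ := by nlinarith [hσ₂.trans_le h12]
    nlinarith [f1, mul_le_mul_of_nonneg_left f2 (sq_nonneg L)]

lemma key_pointwise (K : ℝ) (hK : 1 ≤ K) (A : E2 ≃L[ℝ] E2)
    (hqc : ∀ x y : E2, ‖x‖ = 1 → ‖y‖ = 1 → ‖A x‖ ≤ K * ‖A y‖) (ℓ : E2 →L[ℝ] ℝ) :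
    (1 / K) * |(A : E2 →L[ℝ] E2).det| * ‖ℓ‖ ^ 2 ≤ ‖ℓ.comp (A : E2 →L[ℝ] E2)‖ ^ 2 ∧
    ‖ℓ.comp (A : E2 →L[ℝ] E2)‖ ^ 2 ≤ K * |(A : E2 →L[ℝ] E2).det| * ‖ℓ‖ ^ 2 := by
  have hK0 : (0 : ℝ) < K := lt_of_lt_of_le one_pos hK
  obtain ⟨u, v, hu, hv, huv, hAuv⟩ := exists_svd_pair (A : E2 →L[ℝ] E2)
  set σ₁ : ℝ := max ‖(A : E2 →L[ℝ] E2) u‖ ‖(A : E2 →L[ℝ] E2) v‖ with hσ₁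
  set σ₂ : ℝ := min ‖(A : E2 →L[ℝ] E2) u‖ ‖(A : E2 →L[ℝ] E2) v‖ with hσ₂
  have hdet : |(A : E2 →L[ℝ] E2).det| = σ₁ * σ₂ := by
    rw [abs_det_eq (A : E2 →L[ℝ] E2) hu hv huv hAuv, hσ₁, hσ₂, max_mul_min]
  -- positivity of σ₂
  have hv0 : v ≠ 0 := by intro h; rw [h, norm_zero] at hv; norm_num at hv
  have hu0 : u ≠ 0 := by intro h; rw [h, norm_zero] at hu; norm_num at hu
  have hAu0 : (0:ℝ) < ‖(A : E2 →L[ℝ] E2) u‖ := by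
    simp only [norm_pos_iff]
    exact fun h => hu0 (A.injective (by simpa using h))
  have hAv0 : (0:ℝ) < ‖(A : E2 →L[ℝ] E2) v‖ := by
    simp only [norm_pos_iff]
    exact fun h => hv0 (A.injective (by simpa using h))
  have hσ₂0 : 0 < σ₂ := lt_min hAu0 hAv0
  have hσ₁2 : σ₂ ≤ σ₁ := min_le_max
  -- quasiconformality: σ₁ ≤ K * σ₂
  have hqc' : σ₁ ≤ K * σ₂ := by
    rcases le_total ‖(A : E2 →L[ℝ] E2) u‖ ‖(A : E2 →L[ℝ] E2) v‖ with h | h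
    · rw [hσ₁, hσ₂, max_eq_right h, min_eq_left h]
      exact hqc v u hv hu
    · rw [hσ₁, hσ₂, max_eq_left h, min_eq_right h]
      exact hqc u v hu hv
  -- sandwich for ‖A x‖
  have hsand : ∀ x : E2, σ₂ * ‖x‖ ≤ ‖(A : E2 →L[ℝ] E2) x‖ ∧
      ‖(A : E2 →L[ℝ] E2) x‖ ≤ σ₁ * ‖x‖ := by
    intro x
    have hx := expand_pair hu hv huv x
    set a := ⟪u, x⟫ with ha
    set b := ⟪v, x⟫ with hb
    have hnx : ‖x‖ ^ 2 = a ^ 2 + b ^ 2 := by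
      conv_lhs => rw [hx]
      rw [pythag huv, hu, hv]; ring
    have hAx : (A : E2 →L[ℝ] E2) x = a • (A : E2 →L[ℝ] E2) u + b • (A : E2 →L[ℝ] E2) v := by
      conv_lhs => rw [hx]
      simp
    have hnAx : ‖(A : E2 →L[ℝ] E2) x‖ ^ 2
        = a ^ 2 * ‖(A : E2 →L[ℝ] E2) u‖ ^ 2 + b ^ 2 * ‖(A : E2 →L[ℝ] E2) v‖ ^ 2 := by
      rw [hAx, pythag hAuv]
    have h1 : ‖(A : E2 →L[ℝ] E2) x‖ ^ 2 ≤ (σ₁ * ‖x‖) ^ 2 := by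
      rw [hnAx, mul_pow, hnx]
      have l1 : ‖(A : E2 →L[ℝ] E2) u‖ ^ 2 ≤ σ₁ ^ 2 :=
        pow_le_pow_left₀ (norm_nonneg _) (le_max_left _ _) 2
      have l2 : ‖(A : E2 →L[ℝ] E2) v‖ ^ 2 ≤ σ₁ ^ 2 :=
        pow_le_pow_left₀ (norm_nonneg _) (le_max_right _ _) 2
      nlinarith [sq_nonneg a, sq_nonneg b]
    have h2 : (σ₂ * ‖x‖) ^ 2 ≤ ‖(A : E2 →L[ℝ] E2) x‖ ^ 2 := by
      rw [hnAx, mul_pow, hnx]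
      have l1 : σ₂ ^ 2 ≤ ‖(A : E2 →L[ℝ] E2) u‖ ^ 2 :=
        pow_le_pow_left₀ hσ₂0.le (min_le_left _ _) 2
      have l2 : σ₂ ^ 2 ≤ ‖(A : E2 →L[ℝ] E2) v‖ ^ 2 :=
        pow_le_pow_left₀ hσ₂0.le (min_le_right _ _) 2
      nlinarith [sq_nonneg a, sq_nonneg b]
    constructor
    · calc σ₂ * ‖x‖ = Real.sqrt ((σ₂ * ‖x‖) ^ 2) :=
            (Real.sqrt_sq (by positivity)).symm
        _ ≤ Real.sqrt (‖(A : E2 →L[ℝ] E2) x‖ ^ 2) := Real.sqrt_le_sqrt h2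
        _ = ‖(A : E2 →L[ℝ] E2) x‖ := Real.sqrt_sq (norm_nonneg _)
    · calc ‖(A : E2 →L[ℝ] E2) x‖ = Real.sqrt (‖(A : E2 →L[ℝ] E2) x‖ ^ 2) :=
            (Real.sqrt_sq (norm_nonneg _)).symm
        _ ≤ Real.sqrt ((σ₁ * ‖x‖) ^ 2) := Real.sqrt_le_sqrt h1
        _ = σ₁ * ‖x‖ := Real.sqrt_sq (by positivity)
  -- operator norm bounds
  have hub : ‖ℓ.comp (A : E2 →L[ℝ] E2)‖ ≤ ‖ℓ‖ * σ₁ := by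
    apply ContinuousLinearMap.opNorm_le_bound _ (by positivity)
    intro x
    calc ‖ℓ ((A : E2 →L[ℝ] E2) x)‖ ≤ ‖ℓ‖ * ‖(A : E2 →L[ℝ] E2) x‖ := ℓ.le_opNorm _
      _ ≤ ‖ℓ‖ * (σ₁ * ‖x‖) :=
          mul_le_mul_of_nonneg_left (hsand x).2 (norm_nonneg _)
      _ = ‖ℓ‖ * σ₁ * ‖x‖ := by ring
  have hlb : ‖ℓ‖ * σ₂ ≤ ‖ℓ.comp (A : E2 →L[ℝ] E2)‖ := by
    have hbound : ‖ℓ‖ ≤ ‖ℓ.comp (A : E2 →L[ℝ] E2)‖ * σ₂⁻¹ := by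
      apply ContinuousLinearMap.opNorm_le_bound _ (by positivity)
      intro z
      have hz : z = (A : E2 →L[ℝ] E2) (A.symm z) := by simp
      have hs : σ₂ * ‖A.symm z‖ ≤ ‖z‖ := by
        have := (hsand (A.symm z)).1
        rwa [← hz] at this
      calc ‖ℓ z‖ = ‖(ℓ.comp (A : E2 →L[ℝ] E2)) (A.symm z)‖ := by
            rw [ContinuousLinearMap.comp_apply, ← hz]
        _ ≤ ‖ℓ.comp (A : E2 →L[ℝ] E2)‖ * ‖A.symm z‖ := ContinuousLinearMap.le_opNorm _ _
        _ ≤ ‖ℓ.comp (A : E2 →L[ℝ] E2)‖ * (σ₂⁻¹ * ‖z‖) := by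
            apply mul_le_mul_of_nonneg_left _ (norm_nonneg _)
            rw [le_inv_mul_iff₀ hσ₂0]
            exact hs
        _ = ‖ℓ.comp (A : E2 →L[ℝ] E2)‖ * σ₂⁻¹ * ‖z‖ := by ring
    calc ‖ℓ‖ * σ₂ ≤ (‖ℓ.comp (A : E2 →L[ℝ] E2)‖ * σ₂⁻¹) * σ₂ :=
        mul_le_mul_of_nonneg_right hbound hσ₂0.le
      _ = ‖ℓ.comp (A : E2 →L[ℝ] E2)‖ := by field_simp
  have hc0 : (0:ℝ) ≤ ‖ℓ.comp (A : E2 →L[ℝ] E2)‖ := norm_nonneg _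
  have hl0 : (0:ℝ) ≤ ‖ℓ‖ := norm_nonneg _
  rw [hdet]
  exact arith_aux K σ₁ σ₂ ‖ℓ‖ ‖ℓ.comp (A : E2 →L[ℝ] E2)‖ hK hσ₂0 hσ₁2 hqc' hl0 hc0 hub hlb

/-- Euclidean-chart formulation of the weighted-norm comparison for pullbacks of 1-forms by a
`K`-quasiconformal map (Lemma `middlequasi`): if `φ` is injective on an open set `U ⊆ ℝ²`,
differentiable there with invertible derivative `Dφ p` satisfying the `K`-quasiconformality
bound `‖Dφ p x‖ ≤ K·‖Dφ p y‖` on unit vectors, and the weights satisfy `g ∘ φ = f` on `U`,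
then the weighted `L²` norm of the pulled-back 1-form `p ↦ ω(φ p) ∘ Dφ p` on `U` with weight
`f` is within a factor `K` of the weighted `L²` norm of `ω` on `φ(U)` with weight `g`. -/
theorem quasiconformal_weighted_lintegral_comparison
    (U : Set (EuclideanSpace ℝ (Fin 2))) (hU : IsOpen U) (K : ℝ) (hK : 1 ≤ K)
    (φ : EuclideanSpace ℝ (Fin 2) → EuclideanSpace ℝ (Fin 2)) (hinj : Set.InjOn φ U)
    (Dφ : EuclideanSpace ℝ (Fin 2) →
      (EuclideanSpace ℝ (Fin 2) ≃L[ℝ] EuclideanSpace ℝ (Fin 2)))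
    (hdiff : ∀ p ∈ U, HasFDerivAt φ
      (Dφ p : EuclideanSpace ℝ (Fin 2) →L[ℝ] EuclideanSpace ℝ (Fin 2)) p)
    (hqc : ∀ p ∈ U, ∀ x y : EuclideanSpace ℝ (Fin 2),
      ‖x‖ = 1 → ‖y‖ = 1 → ‖Dφ p x‖ ≤ K * ‖Dφ p y‖)
    (f g : EuclideanSpace ℝ (Fin 2) → ℝ≥0∞) (hf : Measurable f) (hg : Measurable g)
    (hfg : ∀ p ∈ U, g (φ p) = f p)
    (ω : EuclideanSpace ℝ (Fin 2) → (EuclideanSpace ℝ (Fin 2) →L[ℝ] ℝ))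
    (hω : Measurable fun x => ‖ω x‖) :
    ENNReal.ofReal (1 / K) * ∫⁻ x in φ '' U, (‖ω x‖₊ : ℝ≥0∞) ^ 2 * g x ≤
        (∫⁻ p in U, (‖(ω (φ p)).comp
          (Dφ p : EuclideanSpace ℝ (Fin 2) →L[ℝ] EuclideanSpace ℝ (Fin 2))‖₊ : ℝ≥0∞) ^ 2
          * f p) ∧
      (∫⁻ p in U, (‖(ω (φ p)).comp
          (Dφ p : EuclideanSpace ℝ (Fin 2) →L[ℝ] EuclideanSpace ℝ (Fin 2))‖₊ : ℝ≥0∞) ^ 2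
          * f p) ≤
        ENNReal.ofReal K * ∫⁻ x in φ '' U, (‖ω x‖₊ : ℝ≥0∞) ^ 2 * g x := by
  have hK0 : (0:ℝ) < K := lt_of_lt_of_le one_pos hK
  have hcov : (∫⁻ x in φ '' U, (‖ω x‖₊ : ℝ≥0∞) ^ 2 * g x)
      = ∫⁻ p in U, ENNReal.ofReal
          |((Dφ p : E2 →L[ℝ] E2)).det| * ((‖ω (φ p)‖₊ : ℝ≥0∞) ^ 2 * g (φ p)) :=
    lintegral_image_eq_lintegral_abs_det_fderiv_mul volume hU.measurableSet
      (fun p hp => (hdiff p hp).hasFDerivWithinAt) hinj _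
  rw [hcov]
  have hmem : ∀ {c : ℝ≥0∞} {F : E2 → ℝ≥0∞}, c ≠ ⊤ →
      c * ∫⁻ p in U, F p = ∫⁻ p in U, c * F p := by
    intro c F hc
    rw [lintegral_const_mul' c F hc]
  rw [hmem ENNReal.ofReal_ne_top, hmem ENNReal.ofReal_ne_top]
  have hpoint : ∀ p ∈ U,
      ENNReal.ofReal (1 / K) * (ENNReal.ofReal |((Dφ p : E2 →L[ℝ] E2)).det|
        * ((‖ω (φ p)‖₊ : ℝ≥0∞) ^ 2 * g (φ p)))
      ≤ (‖(ω (φ p)).comp (Dφ p : E2 →L[ℝ] E2)‖₊ : ℝ≥0∞) ^ 2 * f p ∧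
      (‖(ω (φ p)).comp (Dφ p : E2 →L[ℝ] E2)‖₊ : ℝ≥0∞) ^ 2 * f p
      ≤ ENNReal.ofReal K * (ENNReal.ofReal |((Dφ p : E2 →L[ℝ] E2)).det|
        * ((‖ω (φ p)‖₊ : ℝ≥0∞) ^ 2 * g (φ p))) := by
    intro p hp
    have hkey := key_pointwise K hK (Dφ p) (hqc p hp) (ω (φ p))
    have habs : (0:ℝ) ≤ |((Dφ p : E2 →L[ℝ] E2)).det| := abs_nonneg _
    have e1 : ((‖ω (φ p)‖₊ : ℝ≥0∞)) ^ 2 = ENNReal.ofReal (‖ω (φ p)‖ ^ 2) := by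
      rw [← enorm_eq_nnnorm, ← ofReal_norm, ← ENNReal.ofReal_pow (norm_nonneg _)]
    have e2 : ((‖(ω (φ p)).comp (Dφ p : E2 →L[ℝ] E2)‖₊ : ℝ≥0∞)) ^ 2
        = ENNReal.ofReal (‖(ω (φ p)).comp (Dφ p : E2 →L[ℝ] E2)‖ ^ 2) := by
      rw [← enorm_eq_nnnorm, ← ofReal_norm, ← ENNReal.ofReal_pow (norm_nonneg _)]
    rw [hfg p hp, e1, e2]
    constructor
    · calc ENNReal.ofReal (1 / K) * (ENNReal.ofReal |((Dφ p : E2 →L[ℝ] E2)).det|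
            * (ENNReal.ofReal (‖ω (φ p)‖ ^ 2) * f p))
          = ENNReal.ofReal (1 / K * |((Dφ p : E2 →L[ℝ] E2)).det| * ‖ω (φ p)‖ ^ 2) * f p := by
            rw [ENNReal.ofReal_mul (by positivity), ENNReal.ofReal_mul (by positivity)]
            ring
        _ ≤ ENNReal.ofReal (‖(ω (φ p)).comp (Dφ p : E2 →L[ℝ] E2)‖ ^ 2) * f p :=
            mul_le_mul_left (ENNReal.ofReal_le_ofReal hkey.1) _
    · calc ENNReal.ofReal (‖(ω (φ p)).comp (Dφ p : E2 →L[ℝ] E2)‖ ^ 2) * f p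
          ≤ ENNReal.ofReal (K * |((Dφ p : E2 →L[ℝ] E2)).det| * ‖ω (φ p)‖ ^ 2) * f p :=
            mul_le_mul_left (ENNReal.ofReal_le_ofReal hkey.2) _
        _ = ENNReal.ofReal K * (ENNReal.ofReal |((Dφ p : E2 →L[ℝ] E2)).det|
            * (ENNReal.ofReal (‖ω (φ p)‖ ^ 2) * f p)) := by
            rw [ENNReal.ofReal_mul (by positivity), ENNReal.ofReal_mul hK0.le]
            ring
  constructor
  · refine lintegral_mono_ae ?_
    rw [ae_restrict_iff' hU.measurableSet]
    exact ae_of_all _ fun p hp => (hpoint p hp).1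
  · refine lintegral_mono_ae ?_
    rw [ae_restrict_iff' hU.measurableSet]
    exact ae_of_all _ fun p hp => (hpoint p hp).2
end
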